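/- There exists a constant C = C(n) ∈ (0,∞) such that for all n-dimensional linear subspaces S and P of ℝ^{n+m} with ‖π_S − π_P‖_F ≤ 1 and every orthonormal basis τ₁, …, τₙ of S, the Gram matrix [⟨π_P τᵢ, π_P τⱼ⟩]_{i,j=1}^n satisfies |√(det [⟨π_P τᵢ, π_P τⱼ⟩]) − 1 + (1/4)‖π_S − π_P‖_F²| ≤ C ‖π_S − π_P‖_F⁴. -/

import Mathlib

/-!
The Gram matrix `G` of the vectors `π_P τᵢ` is Hermitian with eigenvalues `λᵢ ∈ [0, 1]`, the upper
bound because `π_P` is a contraction and `τ` is orthonormal. With `μᵢ = 1 - λᵢ ∈ [0, 1]` we have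
`det G = ∏ (1 - μᵢ)`, and computing `‖π_S - π_P‖_F² = tr (π_S - π_P)²` through traces of
projections gives `‖π_S - π_P‖_F² = 2n - 2 tr G = 2 ∑ μᵢ`. The claim thus reduces to the scalar
estimate `|∏ √(1 - μᵢ) - (1 - ∑ μᵢ / 2)| ≤ 2 (∑ μᵢ)²`, so that `C = 1/2` works for every `n`.
-/

/-- The orthogonal projection of `E` onto the subspace `V`, as a map `E → E`. -/
noncomputable def proj {E : Type*} [NormedAddCommGroup E] [InnerProductSpace ℝ E]
    (V : Submodule ℝ E) [V.HasOrthogonalProjection] : E →L[ℝ] E :=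
  V.subtypeL.comp V.orthogonalProjectionOnto

/-- The squared Frobenius (Hilbert–Schmidt) norm of a linear map `T : E → E`,
computed via an orthonormal basis of `E`. -/
noncomputable def frobSq {E : Type*} [NormedAddCommGroup E] [InnerProductSpace ℝ E]
    [FiniteDimensional ℝ E] (T : E →L[ℝ] E) : ℝ :=
  ∑ i, ‖T (stdOrthonormalBasis ℝ E i)‖ ^ 2

open LinearMap (trace)
open Module (finrank)

section Trace

variable {𝕜 E : Type*} [RCLike 𝕜] [NormedAddCommGroup E] [InnerProductSpace 𝕜 E]
  [FiniteDimensional 𝕜 E]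

lemma trace_comp_starProjection {ι : Type*} [Fintype ι] (V : Submodule 𝕜 E)
    (c : OrthonormalBasis ι 𝕜 V) (T : E →L[𝕜] E) :
    trace 𝕜 E (T ∘L V.starProjection) = ∑ i, inner 𝕜 (c i : E) (T (c i)) := by
  simp [c.starProjection_eq_sum_rankOne, ContinuousLinearMap.comp_finsetSum,
    InnerProductSpace.comp_rankOne, InnerProductSpace.trace_rankOne]

lemma trace_starProjection (V : Submodule 𝕜 E) :
    trace 𝕜 E V.starProjection = finrank 𝕜 V := by
  have hc (i) : ‖((stdOrthonormalBasis 𝕜 V i : V) : E)‖ = 1 :=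
    (stdOrthonormalBasis 𝕜 V).orthonormal.1 i
  simpa [inner_self_eq_norm_sq_to_K, hc] using
    trace_comp_starProjection V (stdOrthonormalBasis 𝕜 V) (.id 𝕜 E)

lemma Orthonormal.trace_comp_starProjection_span {ι : Type*} [Fintype ι] {v : ι → E}
    (hv : Orthonormal 𝕜 v) (T : E →L[𝕜] E) :
    trace 𝕜 E (T ∘L (Submodule.span 𝕜 (Set.range v)).starProjection) =
      ∑ i, inner 𝕜 (v i) (T (v i)) := by
  have hb : Orthonormal 𝕜 (Module.Basis.span hv.linearIndependent) := by
    classical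
    rw [orthonormal_iff_ite] at hv ⊢
    simpa [Submodule.coe_inner, Module.Basis.span_apply] using hv
  simpa [Module.Basis.span_apply] using
    trace_comp_starProjection _ (Module.Basis.toOrthonormalBasis _ hb) T

end Trace

section Gram

open scoped ComplexOrder

variable {𝕜 : Type*} [RCLike 𝕜] {ι : Type*} [Fintype ι] [DecidableEq ι]

lemma Matrix.IsHermitian.eigenvalues_le_of_posSemidef_sub {A : Matrix ι ι 𝕜}
    (hA : A.IsHermitian) {c : ℝ} (h : (c • 1 - A).PosSemidef) (i : ι) :
    hA.eigenvalues i ≤ c := by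
  set x := hA.eigenvectorBasis i
  have hx : star ⇑x ⬝ᵥ ⇑x = 1 := by
    rw [dotProduct_comm, ← EuclideanSpace.inner_eq_star_dotProduct, inner_self_eq_norm_sq_to_K,
      hA.eigenvectorBasis.orthonormal.1 i]
    simp
  have hquad := h.dotProduct_mulVec_nonneg x
  rw [Matrix.sub_mulVec, dotProduct_sub, Matrix.smul_mulVec, Matrix.one_mulVec,
    dotProduct_smul, hx, sub_nonneg] at hquad
  simpa [hA.eigenvalues_eq, x, RCLike.smul_re] using RCLike.re_le_re hquad

lemma Orthonormal.eigenvalues_gram_comp_le {E F : Type*} [NormedAddCommGroup E]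
    [InnerProductSpace 𝕜 E] [NormedAddCommGroup F] [InnerProductSpace 𝕜 F] {v : ι → E}
    (hv : Orthonormal 𝕜 v) (f : E →L[𝕜] F) (i : ι) :
    (Matrix.isHermitian_gram 𝕜 (f ∘ v)).eigenvalues i ≤ ‖f‖ ^ 2 :=
  Matrix.IsHermitian.eigenvalues_le_of_posSemidef_sub _ (by
    simpa [Matrix.gram_eq_one_iff_orthonormal.mpr hv] using
      Matrix.posSemidef_opNorm_smul_gram_sub_gram v f) i

end Gram

section HilbertSchmidt

variable {E : Type*} [NormedAddCommGroup E] [InnerProductSpace ℝ E] [FiniteDimensional ℝ E]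

lemma frobSq_eq_trace_adjoint_comp (T : E →L[ℝ] E) :
    frobSq T = trace ℝ E (ContinuousLinearMap.adjoint T ∘L T) := by
  rw [frobSq, LinearMap.trace_eq_sum_inner _ (stdOrthonormalBasis ℝ E)]
  refine Finset.sum_congr rfl fun e _ => ?_
  simp [ContinuousLinearMap.adjoint_inner_right]

lemma frobSq_starProjection_sub (S P : Submodule ℝ E) :
    frobSq (S.starProjection - P.starProjection) =
      finrank ℝ S + finrank ℝ P - 2 * trace ℝ E (P.starProjection ∘L S.starProjection) := by
  have hadj : ContinuousLinearMap.adjoint (S.starProjection - P.starProjection) =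
      S.starProjection - P.starProjection := by
    rw [← ContinuousLinearMap.star_eq_adjoint]
    exact ((isSelfAdjoint_starProjection S).sub (isSelfAdjoint_starProjection P)).star_eq
  have hsq : (S.starProjection - P.starProjection) ∘L (S.starProjection - P.starProjection) =
      S.starProjection + P.starProjection - S.starProjection ∘L P.starProjection -
        P.starProjection ∘L S.starProjection := by
    simp only [← ContinuousLinearMap.mul_def, mul_sub, sub_mul,
      S.isIdempotentElem_starProjection.eq, P.isIdempotentElem_starProjection.eq]
    abel
  rw [frobSq_eq_trace_adjoint_comp, hadj, hsq]
  simp only [ContinuousLinearMap.toLinearMap_sub, ContinuousLinearMap.toLinearMap_add,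
    ContinuousLinearMap.toLinearMap_comp, map_sub, map_add, trace_starProjection]
  rw [LinearMap.trace_comp_comm' (S.starProjection : E →ₗ[ℝ] E)]
  ring

lemma frobSq_starProjection_span_sub {ι : Type*} [Fintype ι] {v : ι → E}
    (hv : Orthonormal ℝ v) (P : Submodule ℝ E) :
    frobSq ((Submodule.span ℝ (Set.range v)).starProjection - P.starProjection) =
      Fintype.card ι + finrank ℝ P - 2 * (Matrix.gram ℝ (P.starProjection ∘ v)).trace := by
  rw [frobSq_starProjection_sub, hv.trace_comp_starProjection_span,
    finrank_span_eq_card hv.linearIndependent]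
  congr 2
  refine Finset.sum_congr rfl fun i _ => ?_
  rw [Matrix.diag_apply, Matrix.gram_apply, Function.comp_apply,
    Submodule.inner_starProjection_left_eq_right,
    P.starProjection_eq_self_iff.mpr (P.starProjection_apply_mem (v i))]

end HilbertSchmidt

lemma abs_sqrt_one_sub_sub_le {x : ℝ} (h0 : 0 ≤ x) (h1 : x ≤ 1) :
    |√(1 - x) - (1 - x / 2)| ≤ x ^ 2 := by
  have hs0 := Real.sqrt_nonneg (1 - x)
  have hs := Real.sq_sqrt (sub_nonneg.mpr h1)
  rw [abs_le]
  constructor <;> nlinarith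

lemma abs_prod_sqrt_one_sub_sub_le {ι : Type*} (s : Finset ι) {x : ι → ℝ}
    (h0 : ∀ i ∈ s, 0 ≤ x i) (h1 : ∀ i ∈ s, x i ≤ 1) :
    |∏ i ∈ s, √(1 - x i) - (1 - (∑ i ∈ s, x i) / 2)| ≤ 2 * (∑ i ∈ s, x i) ^ 2 := by
  induction s using Finset.cons_induction with
  | empty => simp
  | cons a s ha ih =>
    simp only [Finset.mem_cons, forall_eq_or_imp] at h0 h1
    rw [Finset.prod_cons, Finset.sum_cons]
    set g := ∏ i ∈ s, √(1 - x i)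
    set t := ∑ i ∈ s, x i
    have ht : 0 ≤ t := Finset.sum_nonneg h0.2
    have hg0 : 0 ≤ g := Finset.prod_nonneg fun i _ => Real.sqrt_nonneg _
    have hg1 : g ≤ 1 := Finset.prod_le_one (fun i _ => Real.sqrt_nonneg _)
      fun i hi => Real.sqrt_le_one.mpr (by linarith [h0.2 i hi])
    have hxa := abs_le.mp (abs_sqrt_one_sub_sub_le h0.1 h1.1)
    have hg := abs_le.mp (ih h0.2 h1.2)
    have hsa := Real.sqrt_nonneg (1 - x a)
    -- `√(1-x) g - (1 - (x+t)/2) = (√(1-x) - (1-x/2)) g + (1-x/2) (g - (1-t/2)) + x t / 4`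
    rw [abs_le]
    constructor <;> nlinarith

lemma proj_eq_starProjection {E : Type*} [NormedAddCommGroup E] [InnerProductSpace ℝ E]
    (V : Submodule ℝ E) [V.HasOrthogonalProjection] : proj V = V.starProjection := rfl

/-- There is `C = C(n) > 0` such that for all `n`-dimensional subspaces `S, P` of `ℝ^{n+m}`
with `‖π_S − π_P‖_F ≤ 1` and every orthonormal basis `τ₁, …, τₙ` of `S`, the Gram matrix
`[⟨π_P τᵢ, π_P τⱼ⟩]` satisfies `|√(det [⟨π_P τᵢ, π_P τⱼ⟩]) − 1 + ¼‖π_S − π_P‖_F²| ≤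
C ‖π_S − π_P‖_F⁴`. -/
theorem stmt16 (n : ℕ) :
    ∃ C : ℝ, 0 < C ∧
      ∀ (m : ℕ) (S P : Submodule ℝ (EuclideanSpace ℝ (Fin (n + m)))),
        Module.finrank ℝ S = n → Module.finrank ℝ P = n →
        Real.sqrt (frobSq (proj S - proj P)) ≤ 1 →
        ∀ τ : Fin n → EuclideanSpace ℝ (Fin (n + m)),
          Orthonormal ℝ τ → Submodule.span ℝ (Set.range τ) = S →
          |Real.sqrt (Matrix.det (Matrix.of fun i j =>
              (inner ℝ (proj P (τ i)) (proj P (τ j)) : ℝ))) - 1 +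
            (1 / 4) * frobSq (proj S - proj P)| ≤
          C * frobSq (proj S - proj P) ^ 2 := by
  refine ⟨1 / 2, by norm_num, fun m S P _ hP _ τ hτ hspan => ?_⟩
  subst hspan
  simp only [proj_eq_starProjection]
  set G := Matrix.gram ℝ (P.starProjection ∘ τ)
  have hG : G.IsHermitian := Matrix.isHermitian_gram ℝ _
  set μ : Fin n → ℝ := fun i => 1 - hG.eigenvalues i
  have hμ0 (i : Fin n) : 0 ≤ μ i := by
    have heig := hτ.eigenvalues_gram_comp_le P.starProjection i
    have hnorm := pow_le_one₀ (norm_nonneg _) P.starProjection_norm_le (n := 2)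
    simp only [μ]
    linarith
  have hμ1 (i : Fin n) : μ i ≤ 1 := by
    simpa [μ] using (Matrix.posSemidef_gram ℝ (P.starProjection ∘ τ)).eigenvalues_nonneg i
  have hdet : √G.det = ∏ i, √(1 - μ i) := by
    rw [hG.det_eq_prod_eigenvalues, ← Real.sqrt_prod _ fun i _ => by linarith [hμ1 i]]
    simp [μ]
  have hfrob : frobSq ((Submodule.span ℝ (Set.range τ)).starProjection - P.starProjection) =
      2 * ∑ i, μ i := by
    rw [frobSq_starProjection_span_sub hτ, hG.trace_eq_sum_eigenvalues, hP]
    simp only [Fintype.card_fin, Real.ringHom_apply, Finset.sum_sub_distrib, Finset.sum_const,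
      Finset.card_univ, nsmul_eq_mul, mul_one, μ]
    ring
  change |√G.det - 1 + _| ≤ _
  rw [hdet, hfrob]
  calc _ = |∏ i, √(1 - μ i) - (1 - (∑ i, μ i) / 2)| := by ring_nf
    _ ≤ 2 * (∑ i, μ i) ^ 2 :=
      abs_prod_sqrt_one_sub_sub_le _ (fun i _ => hμ0 i) (fun i _ => hμ1 i)
    _ = _ := by ring
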